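/- Let C be an (n, M, d=2δ, k)_q constant dimension code with 1 ≤ δ, δ−1 ≤ k−δ, and k+δ ≤ n. Let v_2 be the binary vector of length n consisting of k−δ ones, then δ zeros, then δ ones (in positions k+1,...,k+δ), then n−k−δ zeros, and let C_2 = { X ∈ C : v(X) = v_2 }. If |C_2| = q^{(k−δ+1)(n−k)−δ²}, then every codeword Y ∈ C whose identifying vector v(Y) has ones in all of the positions k+1,...,k+δ and satisfies d_H(v(Y), v_2) < 2δ must have v(Y) = v_2 (i.e., Y ∈ C_2). -/

import Mathlib

/-- `M` is in reduced row echelon form with pivot (leading-one) column of row `i`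
given by `piv i`: pivots strictly move right, each leading coefficient is `1`,
it is the first nonzero entry of its row, and it is the only nonzero entry of
its column. -/
def IsRREFWithPivots {F : Type*} [Field F] {k n : ℕ}
    (M : Matrix (Fin k) (Fin n) F) (piv : Fin k → Fin n) : Prop :=
  StrictMono piv ∧
  (∀ i, M i (piv i) = 1) ∧
  (∀ (i : Fin k) (j : Fin n), j < piv i → M i j = 0) ∧
  (∀ i i' : Fin k, i' ≠ i → M i' (piv i) = 0)

/-- `M` is in reduced row echelon form. -/
def IsRREF {F : Type*} [Field F] {k n : ℕ} (M : Matrix (Fin k) (Fin n) F) : Prop :=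
  ∃ piv, IsRREFWithPivots M piv

/-- The identifying (binary) vector associated with pivot columns `piv`:
its ones are exactly in the pivot positions. -/
def idVec {k n : ℕ} (piv : Fin k → Fin n) : Fin n → Bool :=
  fun j => decide (∃ i, piv i = j)

/-- The subspace distance `d_S(X,Y) = dim X + dim Y - 2 dim (X ⊓ Y)`. -/
noncomputable def subDist {F : Type*} [Field F] {n : ℕ} (X Y : Submodule F (Fin n → F)) : ℕ :=
  Module.finrank F X + Module.finrank F Y - 2 * Module.finrank F ↥(X ⊓ Y)

/-!
Since `d_H(v(Y), v₂) < 2δ`, at least `k - δ + 1` rows of `RE(Y)` have their pivot in the support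
`P` of `v₂`; choose a set `R` of exactly `k - δ + 1` of them, containing the `δ` rows with pivots
`k+1, …, k+δ`. For `X ∈ C₂` and a row `y ∈ R`, let `w_X(y) ∈ X` be the combination of the rows of
`RE(X)` that agrees with `y` on `P`. It also vanishes left of the pivot of `y`, like `y`, so it is
determined by its entries in the remaining columns `Q(y)`. The vectors `w_X(y)`, `y ∈ R`, are
independent and two distinct codewords meet in dimension at most `k - δ`, so
`X ↦ (w_X(y)|_{Q(y)})_{y ∈ R}` is injective on `C₂`. Its target has `q^{Σ |Q(y)|} ≤ |C₂|` elements,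
so it is onto: some `X ∈ C₂` contains every row in `R`. Then `dim (X ∩ Y) ≥ k - δ + 1` forces
`X = Y`, and `v(Y) = v₂`.
-/

open Finset

namespace IsRREFWithPivots

variable {F : Type*} [Field F] {k n : ℕ} {M : Matrix (Fin k) (Fin n) F} {piv : Fin k → Fin n}

lemma apply_pivot (h : IsRREFWithPivots M piv) (i i' : Fin k) :
    M i (piv i') = if i = i' then 1 else 0 := by
  split_ifs with hii
  · exact hii ▸ h.2.1 i
  · exact h.2.2.2 i' i hii

lemma sum_smul_apply_pivot (h : IsRREFWithPivots M piv) (c : Fin k → F) (i : Fin k) :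
    (∑ l, c l • M l) (piv i) = c i := by
  simp [Finset.sum_apply, h.apply_pivot]

lemma sum_smul_apply_eq_zero (h : IsRREFWithPivots M piv) {x : Fin n → F} {p j : Fin n}
    (hx : ∀ j' < p, x j' = 0) (hj : ∀ l, p ≤ piv l → j < piv l) :
    (∑ l, x (piv l) • M l) j = 0 := by
  rw [Finset.sum_apply]
  refine Finset.sum_eq_zero fun l _ => ?_
  rcases lt_or_ge (piv l) p with hl | hl
  · simp [hx _ hl]
  · simp [h.2.2.1 l j (hj l hl)]

lemma sum_smul_apply_eq (h : IsRREFWithPivots M piv) {x : Fin n → F} {p j : Fin n}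
    (hx : ∀ j' < p, x j' = 0) (hj : idVec piv j = false → j < p) :
    (∑ l, x (piv l) • M l) j = x j := by
  cases hpj : idVec piv j
  · have hjp := hj hpj
    rw [hx j hjp]
    exact h.sum_smul_apply_eq_zero hx fun l hl => hjp.trans_le hl
  · obtain ⟨l, rfl⟩ : ∃ l, piv l = j := by simpa [idVec] using hpj
    exact h.sum_smul_apply_pivot _ l

lemma eq_sum_smul_of_mem_span (h : IsRREFWithPivots M piv) {x : Fin n → F}
    (hx : x ∈ Submodule.span F (Set.range M)) : x = ∑ l, x (piv l) • M l := by
  obtain ⟨c, rfl⟩ := (Submodule.mem_span_range_iff_exists_fun F).mp hx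
  simp_rw [h.sum_smul_apply_pivot]

lemma exists_pivot_eq_of_mem_span (h : IsRREFWithPivots M piv) {x : Fin n → F}
    (hx : x ∈ Submodule.span F (Set.range M)) {j : Fin n} (h0 : ∀ j' < j, x j' = 0)
    (hj : x j ≠ 0) : ∃ i, piv i = j := by
  by_contra! hne
  refine hj ?_
  rw [h.eq_sum_smul_of_mem_span hx]
  exact h.sum_smul_apply_eq_zero h0 fun l hl => lt_of_le_of_ne hl (hne l).symm

lemma exists_pivot_eq_of_span_le {M' : Matrix (Fin k) (Fin n) F} {piv' : Fin k → Fin n}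
    (h : IsRREFWithPivots M piv) (h' : IsRREFWithPivots M' piv')
    (hle : Submodule.span F (Set.range M') ≤ Submodule.span F (Set.range M)) (i : Fin k) :
    ∃ l, piv l = piv' i :=
  h.exists_pivot_eq_of_mem_span (hle (Submodule.subset_span ⟨i, rfl⟩)) (h'.2.2.1 i)
    (by rw [h'.2.1]; exact one_ne_zero)

lemma idVec_eq_of_span_eq {M' : Matrix (Fin k) (Fin n) F} {piv' : Fin k → Fin n}
    (h : IsRREFWithPivots M piv) (h' : IsRREFWithPivots M' piv')
    (hspan : Submodule.span F (Set.range M) = Submodule.span F (Set.range M')) :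
    idVec piv = idVec piv' := by
  funext j
  simp only [idVec, decide_eq_decide]
  constructor
  · rintro ⟨i, rfl⟩
    exact h'.exists_pivot_eq_of_span_le h hspan.le i
  · rintro ⟨i, rfl⟩
    exact h.exists_pivot_eq_of_span_le h' hspan.ge i

end IsRREFWithPivots

lemma card_filter_idVec_eq_true {k n : ℕ} {piv : Fin k → Fin n} (hpiv : Function.Injective piv) :
    #{j | idVec piv j = true} = k := by
  have : ({j | idVec piv j = true} : Finset (Fin n)) = univ.image piv := by
    ext j; simp [idVec]
  rw [this, card_image_of_injective _ hpiv, card_univ, Fintype.card_fin]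

lemma hammingDist_idVec_add_two_mul_card {k n : ℕ} {piv : Fin k → Fin n}
    (hpiv : Function.Injective piv) {v : Fin n → Bool} (hv : #{j | v j = true} = k) :
    hammingDist (idVec piv) v + 2 * #{i | v (piv i) = true} = 2 * k := by
  set S : Finset (Fin n) := univ.image piv
  set P : Finset (Fin n) := {j | v j = true}
  have hS : #S = k := by rw [card_image_of_injective _ hpiv, card_univ, Fintype.card_fin]
  have hdist : hammingDist (idVec piv) v = #(S \ P) + #(P \ S) := by
    rw [hammingDist, ← card_union_of_disjoint disjoint_sdiff_sdiff]
    congr 1; ext j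
    rw [mem_filter]
    simp only [mem_filter, mem_univ, true_and, mem_union, mem_sdiff, S, P, mem_image, idVec]
    cases v j <;> simp
  have hcommon : #{i | v (piv i) = true} = #(S ∩ P) := by
    rw [← card_image_of_injective _ hpiv]; congr 1; ext j
    simp only [mem_image, mem_filter, mem_univ, true_and, mem_inter, S, P]
    constructor
    · rintro ⟨i, hi, rfl⟩; exact ⟨⟨i, rfl⟩, hi⟩
    · rintro ⟨⟨i, rfl⟩, hi⟩; exact ⟨i, hi, rfl⟩
  have := card_sdiff_add_card_inter S P
  have := card_sdiff_add_card_inter P S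
  rw [inter_comm] at this
  omega

lemma finrank_inf_lt_of_le_subDist {F : Type*} [Field F] {n k δ : ℕ}
    {X Y : Submodule F (Fin n → F)} (hX : Module.finrank F X = k) (hY : Module.finrank F Y = k)
    (h : 2 * δ ≤ subDist X Y) : Module.finrank F ↥(X ⊓ Y) < k - δ + 1 := by
  have := Submodule.finrank_mono (inf_le_left : X ⊓ Y ≤ X)
  unfold subDist at h
  omega

lemma card_le_finrank_of_apply_eq_ite {F α ι : Type*} [Field F] [Finite α] [Fintype ι]
    [DecidableEq ι] {W : Submodule F (α → F)} {z : ι → α → F} (hzW : ∀ i, z i ∈ W) {c : ι → α}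
    (hzc : ∀ i i', z i (c i') = if i = i' then 1 else 0) :
    Fintype.card ι ≤ Module.finrank F W := by
  have hli : LinearIndependent F z := by
    refine Fintype.linearIndependent_iff.2 fun g hg i' => ?_
    simpa [Finset.sum_apply, hzc] using congrFun hg (c i')
  rw [← finrank_span_eq_card hli]
  exact Submodule.finrank_mono (Submodule.span_le.2 (Set.range_subset_iff.2 hzW))

theorem exists_mem_forall_mem_of_card_le {F α ι : Type*} [Field F] [Fintype F] [Finite α]
    [Fintype ι] [DecidableEq ι] (S : Set (Submodule F (α → F)))
    (hS : ∀ X ∈ S, ∀ X' ∈ S, X ≠ X' → Module.finrank F ↥(X ⊓ X') < Fintype.card ι)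
    {y : ι → α → F} {c : ι → α} (hyc : ∀ i i', y i (c i') = if i = i' then 1 else 0)
    {Q : ι → Finset α} (hcQ : ∀ i i', c i' ∉ Q i)
    {w : S → ι → α → F} (hwS : ∀ (X : S) i, w X i ∈ (X : Submodule F (α → F)))
    (hwy : ∀ X i j, j ∉ Q i → w X i j = y i j)
    (hcard : Fintype.card F ^ ∑ i, #(Q i) ≤ Nat.card S) :
    ∃ X ∈ S, ∀ i, y i ∈ X := by
  classical
  let π : S → (i : ι) → Q i → F := fun X i j => w X i j
  have hπ : Function.Injective π := by
    intro X X' hXX'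
    have hw : ∀ i, w X i = w X' i := fun i => funext fun j => by
      by_cases hj : j ∈ Q i
      · exact congrFun (congrFun hXX' i) ⟨j, hj⟩
      · rw [hwy X i j hj, hwy X' i j hj]
    by_contra hne
    have hlt := hS X X.2 X' X'.2 (Subtype.coe_ne_coe.2 hne)
    have hle := card_le_finrank_of_apply_eq_ite (W := (X : Submodule F (α → F)) ⊓ X')
      (z := w X) (fun i => ⟨hwS X i, hw i ▸ hwS X' i⟩)
      (fun i i' => (hwy X i (c i') (hcQ i i')).trans (hyc i i'))
    omega
  have hcod : Nat.card ((i : ι) → Q i → F) = Fintype.card F ^ ∑ i, #(Q i) := by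
    simp [Nat.card_eq_fintype_card, Finset.prod_pow_eq_pow_sum]
  obtain ⟨X, hX⟩ := (hπ.bijective_of_nat_card_le (hcod ▸ hcard)).2 fun i j => y i j
  refine ⟨X, X.2, fun i => ?_⟩
  have : w X i = y i := funext fun j => by
    by_cases hj : j ∈ Q i
    · exact congrFun (congrFun hX i) ⟨j, hj⟩
    · exact hwy X i j hj
  exact this ▸ hwS X i

lemma sum_card_filter_nonpivot_le {n k δ : ℕ} (hδk : δ - 1 ≤ k - δ) (hkn : k + δ ≤ n)
    {v2 : Fin n → Bool}
    (hv2 : v2 = fun j : Fin n =>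
      decide ((j : ℕ) < k - δ ∨ (k ≤ (j : ℕ) ∧ (j : ℕ) < k + δ)))
    (hwt : #{j | v2 j = true} = k) {piv : Fin k → Fin n} {B R : Finset (Fin k)}
    (hBR : B ⊆ R) (hB : #B = δ) (hR : #R = k - δ + 1) (hBk : ∀ i ∈ B, k ≤ (piv i : ℕ)) :
    ∑ i ∈ R, #{j | v2 j = false ∧ piv i ≤ j} ≤ (k - δ + 1) * (n - k) - δ ^ 2 := by
  have hδ : δ ≤ k := by simpa [hB] using card_le_univ B
  have hfree : ∀ i, #{j | v2 j = false ∧ piv i ≤ j} ≤ n - k := fun i => by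
    calc _ ≤ #{j | ¬ v2 j = true} := card_le_card fun j => by
          simp only [mem_filter, mem_univ, true_and, Bool.not_eq_true]
          exact And.left
      _ = n - k := by rw [filter_not, card_sdiff_of_subset (filter_subset _ _), hwt]; simp
  have hfreeB : ∀ i ∈ B, #{j | v2 j = false ∧ piv i ≤ j} ≤ n - (k + δ) := fun i hi => by
    calc _ ≤ #{j : Fin n | ¬ (j : ℕ) < k + δ} := card_le_card fun j => by
          have := hBk i hi
          simp only [hv2, mem_filter, mem_univ, true_and, decide_eq_false_iff_not, Fin.le_def]
          omega
      _ = n - (k + δ) := by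
          rw [filter_not, card_sdiff_of_subset (filter_subset _ _), Fin.card_filter_val_lt]
          simp; omega
  calc ∑ i ∈ R, #{j | v2 j = false ∧ piv i ≤ j}
      = ∑ i ∈ R \ B, #{j | v2 j = false ∧ piv i ≤ j}
        + ∑ i ∈ B, #{j | v2 j = false ∧ piv i ≤ j} := (sum_sdiff hBR).symm
    _ ≤ #(R \ B) * (n - k) + #B * (n - (k + δ)) :=
        add_le_add (sum_le_card_nsmul _ _ _ fun i _ => hfree i) (sum_le_card_nsmul _ _ _ hfreeB)
    _ = (k - δ + 1) * (n - k) - δ ^ 2 := by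
        rw [card_sdiff_of_subset hBR, hR, hB]
        obtain ⟨a, ha⟩ : ∃ a, k + 1 = 2 * δ + a := ⟨k + 1 - 2 * δ, by omega⟩
        obtain ⟨m, rfl⟩ : ∃ m, n = k + δ + m := ⟨n - (k + δ), by omega⟩
        rw [show k - δ + 1 = δ + a by omega, show k + δ + m - k = δ + m by omega,
          show k + δ + m - (k + δ) = m by omega, Nat.add_sub_cancel_left]
        rw [eq_comm, Nat.sub_eq_iff_eq_add (by nlinarith)]
        ring

lemma exists_rows_of_hammingDist_lt {n k δ : ℕ} (hδk : δ - 1 ≤ k - δ) (hkn : k + δ ≤ n)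
    {v2 : Fin n → Bool}
    (hv2 : v2 = fun j : Fin n =>
      decide ((j : ℕ) < k - δ ∨ (k ≤ (j : ℕ) ∧ (j : ℕ) < k + δ)))
    (hwt : #{j | v2 j = true} = k) {piv : Fin k → Fin n} (hpiv : Function.Injective piv)
    (hones : ∀ j : Fin n, k ≤ (j : ℕ) → (j : ℕ) < k + δ → idVec piv j = true)
    (hham : hammingDist (idVec piv) v2 < 2 * δ) :
    ∃ R : Finset (Fin k), #R = k - δ + 1 ∧ (∀ i ∈ R, v2 (piv i) = true) ∧
      ∑ i ∈ R, #{j | v2 j = false ∧ piv i ≤ j} ≤ (k - δ + 1) * (n - k) - δ ^ 2 := by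
  have hbot : ∀ r : Fin δ, ∃ i, (piv i : ℕ) = k + r := fun r => by
    simpa [idVec, Fin.ext_iff] using hones ⟨k + r, by omega⟩ (by simp) (by simp)
  choose ρ hρ using hbot
  have hρinj : Function.Injective ρ := fun r r' h => Fin.ext (by
    have := hρ r; have := hρ r'; simp_all)
  have hB : #(univ.image ρ) = δ := by
    rw [card_image_of_injective _ hρinj, card_univ, Fintype.card_fin]
  have hBk : ∀ i ∈ univ.image ρ, k ≤ (piv i : ℕ) := by
    simp [hρ]
  have hBgood : univ.image ρ ⊆ ({i | v2 (piv i) = true} : Finset (Fin k)) := by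
    intro i hi
    obtain ⟨r, -, rfl⟩ := mem_image.1 hi
    simp [hv2, hρ r]
  have hgood : k - δ + 1 ≤ #{i | v2 (piv i) = true} := by
    have := hammingDist_idVec_add_two_mul_card hpiv hwt
    have := card_le_univ (univ.image ρ)
    simp only [hB, Fintype.card_fin] at this
    omega
  obtain ⟨R, hBR, hRgood, hR⟩ :=
    exists_subsuperset_card_eq hBgood (by omega : #(univ.image ρ) ≤ k - δ + 1) hgood
  exact ⟨R, hR, fun i hi => (mem_filter.1 (hRgood hi)).2,
    sum_card_filter_nonpivot_le hδk hkn hv2 hwt hBR hB hR hBk⟩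

theorem no_close_identifying_vector_second_general {F : Type*} [Field F] [Fintype F]
    {n k δ : ℕ} (hδk : δ - 1 ≤ k - δ) (hkn : k + δ ≤ n)
    (C : Set (Submodule F (Fin n → F)))
    (hdim : ∀ X ∈ C, Module.finrank F X = k)
    (hdist : ∀ X ∈ C, ∀ Y ∈ C, X ≠ Y → 2 * δ ≤ subDist X Y)
    (v2 : Fin n → Bool)
    (hv2 : v2 = fun j : Fin n =>
      decide ((j : ℕ) < k - δ ∨ (k ≤ (j : ℕ) ∧ (j : ℕ) < k + δ)))
    (hC2 : Nat.card ↥{X | X ∈ C ∧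
        ∃ (M : Matrix (Fin k) (Fin n) F) (piv : Fin k → Fin n),
          IsRREFWithPivots M piv ∧ Submodule.span F (Set.range M) = X ∧
          idVec piv = v2} =
      Fintype.card F ^ ((k - δ + 1) * (n - k) - δ ^ 2)) :
    ∀ Y ∈ C, ∀ (MY : Matrix (Fin k) (Fin n) F) (pivY : Fin k → Fin n),
      IsRREFWithPivots MY pivY → Submodule.span F (Set.range MY) = Y →
      (∀ j : Fin n, k ≤ (j : ℕ) → (j : ℕ) < k + δ → idVec pivY j = true) →
      hammingDist (idVec pivY) v2 < 2 * δ → idVec pivY = v2 := by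
  intro Y hY MY pivY hRY hspanY hones hham
  set C₂ := {X | X ∈ C ∧ ∃ (M : Matrix (Fin k) (Fin n) F) (piv : Fin k → Fin n),
    IsRREFWithPivots M piv ∧ Submodule.span F (Set.range M) = X ∧ idVec piv = v2}
  choose A piv hA hspanA hidA using fun X : C₂ => X.2.2
  obtain ⟨X₀⟩ := (Nat.card_pos_iff.1 (hC2 ▸ pow_pos Fintype.card_pos _)).1
  obtain ⟨R, hR, hRv2, hRsum⟩ := exists_rows_of_hammingDist_lt hδk hkn hv2
    (hidA X₀ ▸ card_filter_idVec_eq_true (hA X₀).1.injective) hRY.1.injective hones hham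
  have hunit : ∀ i i' : R, MY i (pivY i') = if i = i' then 1 else 0 := fun i i' => by
    simp only [hRY.apply_pivot, Subtype.ext_iff]
  obtain ⟨X, hX, hRX⟩ := exists_mem_forall_mem_of_card_le C₂
    (fun X hX X' hX' hne => Fintype.card_coe R ▸ hR ▸
      finrank_inf_lt_of_le_subDist (hdim X hX.1) (hdim X' hX'.1) (hdist X hX.1 X' hX'.1 hne))
    hunit (Q := fun i => {j | v2 j = false ∧ pivY i ≤ j}) (fun i i' => by simp [hRv2 i' i'.2])
    (w := fun X i => ∑ l, MY i (piv X l) • A X l)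
    (fun X i => hspanA X ▸ Submodule.sum_smul_mem _ _ fun l _ => Submodule.subset_span ⟨l, rfl⟩)
    (fun X i j hj => (hA X).sum_smul_apply_eq (hRY.2.2.1 i) (by simpa [hidA X] using hj))
    (hC2 ▸ Nat.pow_le_pow_right Fintype.card_pos ((R.sum_coe_sort _).trans_le hRsum))
  have hXY : X = Y := by
    by_contra hne
    have hlt := finrank_inf_lt_of_le_subDist (hdim X hX.1) (hdim Y hY) (hdist X hX.1 Y hY hne)
    have hle := card_le_finrank_of_apply_eq_ite (W := X ⊓ Y)
      (fun i => ⟨hRX i, hspanY ▸ Submodule.subset_span ⟨i, rfl⟩⟩) hunit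
    rw [Fintype.card_coe, hR] at hle
    omega
  rw [← hidA ⟨X, hX⟩]
  exact hRY.idVec_eq_of_span_eq (hA _) (hspanY.trans (hXY ▸ (hspanA ⟨X, hX⟩).symm))

/-- **Lemma 6 of the paper.** Let `C` be an `(n, M, d = 2δ, k)_q`
constant dimension code with `1 ≤ δ`, `δ - 1 ≤ k - δ` and `k + δ ≤ n`. Let
`v₂ = 1^(k-δ) 0^δ 1^δ 0^(n-k-δ)` and `C₂ = {X ∈ C : v(X) = v₂}`. If
`|C₂| = q^((k-δ+1)(n-k) - δ²)`, then every codeword `Y ∈ C` whose identifying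
vector has ones in all positions `k+1, …, k+δ` (0-indexed: `k, …, k+δ-1`) and
satisfies `d_H(v(Y), v₂) < 2δ` must have `v(Y) = v₂`. -/
theorem no_close_identifying_vector_second {F : Type*} [Field F] [Fintype F]
    {n k δ : ℕ} (hδ1 : 1 ≤ δ) (hδk : δ - 1 ≤ k - δ) (hkn : k + δ ≤ n)
    (C : Set (Submodule F (Fin n → F)))
    (hdim : ∀ X ∈ C, Module.finrank F X = k)
    (hdist : ∀ X ∈ C, ∀ Y ∈ C, X ≠ Y → 2 * δ ≤ subDist X Y)
    (v2 : Fin n → Bool)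
    (hv2 : v2 = fun j : Fin n =>
      decide ((j : ℕ) < k - δ ∨ (k ≤ (j : ℕ) ∧ (j : ℕ) < k + δ)))
    (hC2 : Nat.card ↥{X | X ∈ C ∧
        ∃ (M : Matrix (Fin k) (Fin n) F) (piv : Fin k → Fin n),
          IsRREFWithPivots M piv ∧ Submodule.span F (Set.range M) = X ∧
          idVec piv = v2} =
      Fintype.card F ^ ((k - δ + 1) * (n - k) - δ ^ 2)) :
    ∀ Y ∈ C, ∀ (MY : Matrix (Fin k) (Fin n) F) (pivY : Fin k → Fin n),
      IsRREFWithPivots MY pivY → Submodule.span F (Set.range MY) = Y →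
      (∀ j : Fin n, k ≤ (j : ℕ) → (j : ℕ) < k + δ → idVec pivY j = true) →
      hammingDist (idVec pivY) v2 < 2 * δ → idVec pivY = v2 :=
  no_close_identifying_vector_second_general hδk hkn C hdim hdist v2 hv2 hC2
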